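/- Let 𝓛 : ℝᵖ → ℝ be a differentiable function, let Q : ℝᵖ → ℝᵖ be an orthogonal linear transformation with 𝓛 ∘ Q = 𝓛, let η > 0, and let γ : ℝᵖ → ℝᵖ be the gradient descent map γ(v) = v − η ∇_v 𝓛. Then gradient descent commutes with Q: for every v ∈ ℝᵖ and every k ≥ 0, γᵏ(Q·v) = Q·γᵏ(v), where γᵏ denotes the k-fold composition of γ. -/
import Mathlib

open scoped Classical RealInnerProductSpace

noncomputable section

abbrev Euc (p : ℕ) := EuclideanSpace ℝ (Fin p)

lemma grad_comm {p : ℕ} (𝓛 : Euc p → ℝ) (h𝓛 : Differentiable ℝ 𝓛)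
    (Q : Euc p ≃ₗᵢ[ℝ] Euc p) (hQ : ∀ v, 𝓛 (Q v) = 𝓛 v) (v : Euc p) :
    gradient 𝓛 (Q v) = Q (gradient 𝓛 v) := by
  have hcomp : 𝓛 = 𝓛 ∘ Q := by
    funext x; simp [hQ x]
  have hfd : fderiv ℝ 𝓛 v =
      (fderiv ℝ 𝓛 (Q v)).comp (Q.toLinearIsometry.toContinuousLinearMap) := by
    conv_lhs => rw [hcomp]
    rw [fderiv_comp v (h𝓛 (Q v)) (Q.toLinearIsometry.toContinuousLinearMap.differentiableAt)]
    congr 1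
    exact Q.toLinearIsometry.toContinuousLinearMap.fderiv
  apply ext_inner_right ℝ
  intro y
  have h1 : ⟪gradient 𝓛 (Q v), y⟫ = fderiv ℝ 𝓛 (Q v) y := by
    rw [gradient, InnerProductSpace.toDual_symm_apply]
  have h2 : ⟪(Q (gradient 𝓛 v) : Euc p), y⟫
      = ⟪gradient 𝓛 v, Q.symm y⟫ := by
    rw [← Q.inner_map_map (gradient 𝓛 v) (Q.symm y)]
    simp
  rw [h1, h2, gradient, InnerProductSpace.toDual_symm_apply, hfd]
  simp

/-- If 𝓛 : ℝᵖ → ℝ is differentiable and invariant under an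
orthogonal transformation Q, then gradient descent γ(v) = v − η ∇_v 𝓛 commutes with Q:
γᵏ(Q v) = Q (γᵏ v) for all k ≥ 0 and all v. -/
theorem gradient_descent_comm_orthogonal {p : ℕ}
    (𝓛 : Euc p → ℝ) (h𝓛 : Differentiable ℝ 𝓛)
    (Q : Euc p ≃ₗᵢ[ℝ] Euc p)
    (hQ : ∀ v, 𝓛 (Q v) = 𝓛 v)
    (η : ℝ) (hη : 0 < η) (v : Euc p) (k : ℕ) :
    (fun w => w - η • gradient 𝓛 w)^[k] (Q v)
      = Q ((fun w => w - η • gradient 𝓛 w)^[k] v) := by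
  induction k generalizing v with
  | zero => simp
  | succ n ih =>
    rw [Function.iterate_succ_apply, Function.iterate_succ_apply]
    have : (Q v : Euc p) - η • gradient 𝓛 (Q v) = Q (v - η • gradient 𝓛 v) := by
      rw [grad_comm 𝓛 h𝓛 Q hQ v, map_sub, map_smul]
    rw [this, ih]

end
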